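/- For 0 ≤ v ≤ 1, let ρ_v = v·|ψ⁻⟩⟨ψ⁻| + (1−v)·I/4 denote the two-qubit Werner state, where |ψ⁻⟩ = (|01⟩−|10⟩)/√2 and I is the 4×4 identity matrix. Then the correlation matrix of ρ_v satisfies T_{ρ_v}ᵀ T_{ρ_v} = v²·Id₃, so all three eigenvalues of T_{ρ_v}ᵀ T_{ρ_v} equal v². Consequently, for Werner states ρ_{v_AB} and ρ_{v_BC}, the maximal bilocality parameter B_max = √(√(t^A₁ t^C₁) + √(t^A₂ t^C₂)) equals √(2·v_AB·v_BC); in particular B_max > 1 if and only if v_AB·v_BC > 1/2. -/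
import Mathlib


open Matrix Kronecker Complex ComplexOrder

/-- The Pauli matrices σ₁ = σ_x, σ₂ = σ_y, σ₃ = σ_z. -/
noncomputable def pauli : Fin 3 → Matrix (Fin 2) (Fin 2) ℂ :=
  ![!![0, 1; 1, 0], !![0, -Complex.I; Complex.I, 0], !![1, 0; 0, -1]]

/-- For v ∈ ℝ³, the matrix v·σ = v₁σ_x + v₂σ_y + v₃σ_z. -/
noncomputable def pauliVec (v : Fin 3 → ℝ) : Matrix (Fin 2) (Fin 2) ℂ :=
  (v 0 : ℂ) • pauli 0 + (v 1 : ℂ) • pauli 1 + (v 2 : ℂ) • pauli 2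

/-- A two-qubit state: a 4×4 complex positive semidefinite matrix of trace 1. -/
def TwoQubitState (ρ : Matrix (Fin 2 × Fin 2) (Fin 2 × Fin 2) ℂ) : Prop :=
  ρ.PosSemidef ∧ ρ.trace = 1

/-- The correlation matrix of a two-qubit state: (T_ρ)_{nm} = Tr[(σ_n ⊗ σ_m) ρ]. -/
noncomputable def corr (ρ : Matrix (Fin 2 × Fin 2) (Fin 2 × Fin 2) ℂ) :
    Matrix (Fin 3) (Fin 3) ℝ :=
  Matrix.of fun n m => ((pauli n ⊗ₖ pauli m) * ρ).trace.re

/-- The two largest eigenvalues (with multiplicity, in decreasing order) of a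
    symmetric real 3×3 matrix, as the pair (largest, second largest). -/
noncomputable def topEigs (M : Matrix (Fin 3) (Fin 3) ℝ) : ℝ × ℝ :=
  if h : M.IsHermitian then
    ((h.eigenvalues ∘ Tuple.sort h.eigenvalues) 2,
     (h.eigenvalues ∘ Tuple.sort h.eigenvalues) 1)
  else 0

/-- Computational basis vectors of ℂ² ⊗ ℂ² ≅ ℂ⁴. -/
def ket (i j : Fin 2) : (Fin 2 × Fin 2) → ℂ := fun p => if p = (i, j) then 1 else 0

/-- The singlet state |ψ⁻⟩ = (|01⟩ − |10⟩)/√2. -/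
noncomputable def psiMinus : (Fin 2 × Fin 2) → ℂ := ((Real.sqrt 2 : ℂ))⁻¹ • (ket 0 1 - ket 1 0)

/-- The rank-one projection |v⟩⟨v|. -/
noncomputable def proj (v : (Fin 2 × Fin 2) → ℂ) :
    Matrix (Fin 2 × Fin 2) (Fin 2 × Fin 2) ℂ :=
  Matrix.vecMulVec v (star v)

/-- The Werner state ρ_v = v·|ψ⁻⟩⟨ψ⁻| + (1−v)·I/4. -/
noncomputable def werner (v : ℝ) : Matrix (Fin 2 × Fin 2) (Fin 2 × Fin 2) ℂ :=
  (v : ℂ) • proj psiMinus +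
    ((1 - v : ℝ) : ℂ) • ((1/4 : ℂ) • (1 : Matrix (Fin 2 × Fin 2) (Fin 2 × Fin 2) ℂ))


lemma werner_apply_aux (v : ℝ) (p q : Fin 2 × Fin 2) :
    werner v p q =
      (v:ℂ) * ((if p = (0,1) then 1 else if p = (1,0) then -1 else 0) *
               (if q = (0,1) then 1 else if q = (1,0) then -1 else 0)) / 2 +
      (if p = q then ((1-v:ℝ):ℂ)/4 else 0) := by
  have h2 : ((Real.sqrt 2 : ℂ))⁻¹ * ((Real.sqrt 2 : ℂ))⁻¹ = 1/2 := by
    rw [← mul_inv]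
    norm_num [← Complex.ofReal_mul, Real.mul_self_sqrt]
  obtain ⟨i, j⟩ := p; obtain ⟨k, l⟩ := q
  fin_cases i <;> fin_cases j <;> fin_cases k <;> fin_cases l <;>
    simp [werner, proj, psiMinus, ket, Matrix.vecMulVec, Matrix.one_apply, Prod.ext_iff] <;>
    ring_nf <;> simp [show ((Real.sqrt 2:ℂ))⁻¹ ^ 2 = 1/2 from by rw [sq]; exact h2] <;> ring

set_option linter.unnecessarySeqFocus false in
lemma corr_werner_aux (v : ℝ) : corr (werner v) = (-v) • (1 : Matrix (Fin 3) (Fin 3) ℝ) := by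
  ext n m
  fin_cases n <;> fin_cases m <;>
    simp [corr, Matrix.trace, Matrix.mul_apply, Fintype.sum_prod_type, Fin.sum_univ_succ,
      werner_apply_aux, pauli, kroneckerMap_apply, Matrix.one_apply] <;>
    norm_num [Prod.ext_iff, Complex.ext_iff] <;> ring

lemma topEigs_smul_one_aux (c : ℝ) : topEigs (c • (1 : Matrix (Fin 3) (Fin 3) ℝ)) = (c, c) := by
  have h : (c • (1 : Matrix (Fin 3) (Fin 3) ℝ)).IsHermitian := by
    simp [Matrix.IsHermitian, Matrix.conjTranspose_smul]
  rw [topEigs, dif_pos h]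
  have key : ∀ j, h.eigenvalues j = c := by
    intro j
    have hm := h.mulVec_eigenvectorBasis j
    have hne : ⇑(h.eigenvectorBasis j) ≠ 0 := by
      have := h.eigenvectorBasis.orthonormal.ne_zero j
      intro hc; apply this; ext i; exact congrFun hc i
    rw [Matrix.smul_mulVec, Matrix.one_mulVec] at hm
    obtain ⟨i, hi⟩ := Function.ne_iff.mp hne
    have := congrFun hm i
    simp only [Pi.smul_apply, smul_eq_mul] at this
    exact (mul_right_cancel₀ hi this).symm
  simp [key]

lemma gram_werner_aux (v : ℝ) :
    (corr (werner v))ᵀ * corr (werner v) = (v ^ 2) • (1 : Matrix (Fin 3) (Fin 3) ℝ) := by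
  rw [corr_werner_aux]
  simp [Matrix.transpose_smul, Matrix.smul_mul, Matrix.mul_smul, smul_smul]
  ring_nf

/-- For Werner states: T_{ρ_v}ᵀ T_{ρ_v} = v²·Id₃ (so all eigenvalues equal v²),
    and consequently the maximal bilocality parameter for a pair of Werner states
    ρ_{v_AB}, ρ_{v_BC} equals √(2·v_AB·v_BC); in particular it exceeds 1 exactly
    when v_AB·v_BC > 1/2. -/
theorem werner_states_bilocality
    (v : ℝ) (hv : 0 ≤ v) (hv1 : v ≤ 1) :
    ((corr (werner v))ᵀ * corr (werner v) = (v ^ 2) • (1 : Matrix (Fin 3) (Fin 3) ℝ)) ∧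
    (∀ t : ℝ, (∃ w : Fin 3 → ℝ, w ≠ 0 ∧
        ((corr (werner v))ᵀ * corr (werner v)).mulVec w = t • w) ↔ t = v ^ 2) ∧
    (∀ vAB vBC : ℝ, 0 ≤ vAB → vAB ≤ 1 → 0 ≤ vBC → vBC ≤ 1 →
      ∀ tA1 tA2 tC1 tC2 : ℝ,
        topEigs ((corr (werner vAB))ᵀ * corr (werner vAB)) = (tA1, tA2) →
        topEigs ((corr (werner vBC))ᵀ * corr (werner vBC)) = (tC1, tC2) →
        Real.sqrt (Real.sqrt (tA1 * tC1) + Real.sqrt (tA2 * tC2))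
          = Real.sqrt (2 * vAB * vBC) ∧
        (1 < Real.sqrt (Real.sqrt (tA1 * tC1) + Real.sqrt (tA2 * tC2)) ↔
          1/2 < vAB * vBC)) := by
  have hgram := gram_werner_aux v
  refine ⟨hgram, ?_, ?_⟩
  · intro t
    constructor
    · rintro ⟨w, hw, hmul⟩
      rw [hgram, Matrix.smul_mulVec, Matrix.one_mulVec] at hmul
      obtain ⟨i, hi⟩ := Function.ne_iff.mp hw
      have := congrFun hmul i
      simp only [Pi.smul_apply, smul_eq_mul] at this
      exact (mul_right_cancel₀ hi this).symm
    · rintro rfl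
      refine ⟨fun _ => 1, ?_, ?_⟩
      · intro hc; simpa using congrFun hc 0
      · rw [hgram, Matrix.smul_mulVec, Matrix.one_mulVec]
  · intro vAB vBC hAB0 hAB1 hBC0 hBC1 tA1 tA2 tC1 tC2 hA hC
    rw [gram_werner_aux, topEigs_smul_one_aux] at hA hC
    injection hA with h1 h2; subst h1; subst h2
    injection hC with h3 h4; subst h3; subst h4
    have hprod : 0 ≤ vAB * vBC := mul_nonneg hAB0 hBC0
    have hs : Real.sqrt (vAB ^ 2 * vBC ^ 2) = vAB * vBC := by
      rw [show vAB ^ 2 * vBC ^ 2 = (vAB * vBC) ^ 2 by ring, Real.sqrt_sq hprod]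
    have heq : Real.sqrt (Real.sqrt (vAB ^ 2 * vBC ^ 2) + Real.sqrt (vAB ^ 2 * vBC ^ 2))
        = Real.sqrt (2 * vAB * vBC) := by
      rw [hs]; ring_nf
    refine ⟨heq, ?_⟩
    rw [heq, show (1:ℝ) < Real.sqrt (2 * vAB * vBC) ↔ 1 ^ 2 < 2 * vAB * vBC from
      Real.lt_sqrt (by norm_num)]
    constructor <;> intro h <;> nlinarith
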